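/- Folk theorem for commitment games with conditional information disclosure (Theorem 1, equilibrium construction): Let G be a finite Bayesian game and G(D) a commitment game over G with correlation signal (C, λ). Let μ be a correlated policy realized via the signal by measurable maps m(t, ·) : C → A (for each type profile t, the pushforward of λ under m(t, ·) equals μ(·|t)), and let x_j(t_j) = E_{t_{-j}∼q(·|t_j)} u_j(t, μ(·|t)) be the induced feasible payoff vector. Suppose for each player j there is a correlated policy of the players other than j realized via the signal by measurable maps w_{-j}(t_{-j}, ·) : C → ∏_{k≠j} A_k satisfying the signal-robust INTIR condition: for every t_j ∈ T_j and every measurable map α : C → A_j, E_{c∼λ} E_{t_{-j}∼q(·|t_j)} u_j(t, (α(c), w_{-j}(t_{-j}, c))) ≤ x_j(t_j). Suppose further there exist devices d*_i ∈ D_i (i = 1,…,n) such that for every type t_i and every input (d'_{-i}, θ_{-i}, c): (a) the j-entry of y^i_{d*_i(t_i)}(d'_{-i}) equals 1 if and only if d'_j = d*_j; (b) if d'_{-i} = d*_{-i} and every component of θ_{-i} is a disclosed type, then r^i_{d*_i(t_i)}(d'_{-i}, θ_{-i}, c) = m_i(s, c), the i-th component of the realized target action profile for the type profile s assembled from θ_{-i}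 and t_i; (c) if exactly one player j has d'_j ≠ d*_j and every component of θ_{-i} other than the j-component is a disclosed type, then r^i_{d*_i(t_i)}(d'_{-i}, θ_{-i}, c) = w_{-j,i}(s_{-j}, c), the i-th component of the realized punishment profile against j for the profile s_{-j} of types of players other than j assembled from θ_{-i} and t_i. Then the strategy profile σ with σ_i(t_i) = d*_i for all i and t_i is a Bayesian Nash equilibrium of G(D), and its interim expected payoff vector satisfies X^σ_j(t_j) = x_j(t_j) for every player j and type t_j. -/
import Mathlib


open MeasureTheory

noncomputable section

/-- Assemble a dependent profile from the `j`-component `xj` and the components `xm` of the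
players other than `j`. -/
def combine {n : ℕ} {X : Fin n → Type} (j : Fin n) (xj : X j)
    (xm : ∀ i : {i : Fin n // i ≠ j}, X i.1) (i : Fin n) : X i :=
  if h : i = j then cast (congrArg X h).symm xj else xm ⟨i, h⟩

/-- Conditional probability `q(t₋ⱼ | tⱼ)` of the other players' types given one's own type,
derived from the common prior `q`. -/
def condQ {n : ℕ} {T : Fin n → Type} [∀ i, Fintype (T i)]
    (q : (∀ i, T i) → ℝ) (j : Fin n) (tj : T j)
    (tm : ∀ i : {i : Fin n // i ≠ j}, T i.1) : ℝ :=
  q (combine j tj tm) /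
    ∑ s : ∀ i : {i : Fin n // i ≠ j}, T i.1, q (combine j tj s)

/-- The action played in the base game by player `i` in the commitment game, given the
submitted device profile `d`, the true type profile `t`, and the realized signal `c`:
player `i`'s response function is applied to the others' devices, the disclosed types
(player `j ≠ i` disclosing `t j` exactly when the `i`-entry of `j`'s disclosure vector is 1),
and the signal. -/
def play {n : ℕ} {T A D : Fin n → Type} {C : Type}
    (r : ∀ i : Fin n, D i → T i → (∀ j : {j : Fin n // j ≠ i}, D j.1) →
      (∀ j : {j : Fin n // j ≠ i}, Option (T j.1)) → C → A i)
    (y : ∀ i : Fin n, D i → T i → (∀ j : {j : Fin n // j ≠ i}, D j.1) →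
      {j : Fin n // j ≠ i} → Bool)
    (d : ∀ i, D i) (t : ∀ i, T i) (c : C) (i : Fin n) : A i :=
  r i (d i) (t i) (fun j => d j.1)
    (fun j =>
      if y j.1 (d j.1) (t j.1) (fun k => d k.1) ⟨i, Ne.symm j.2⟩ then some (t j.1)
      else none) c

/-- The interim expected payoff `Xᵠ_j(t_j)` of player `j` of type `tj` in the commitment game
under the strategy profile `σ`. -/
def interim {n : ℕ} {T A D : Fin n → Type} {C : Type} [MeasurableSpace C]
    [∀ i, Fintype (T i)]
    (q : (∀ i, T i) → ℝ) (u : ∀ _i : Fin n, (∀ i, T i) → (∀ i, A i) → ℝ)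
    (r : ∀ i : Fin n, D i → T i → (∀ j : {j : Fin n // j ≠ i}, D j.1) →
      (∀ j : {j : Fin n // j ≠ i}, Option (T j.1)) → C → A i)
    (y : ∀ i : Fin n, D i → T i → (∀ j : {j : Fin n // j ≠ i}, D j.1) →
      {j : Fin n // j ≠ i} → Bool)
    (ν : Measure C) (σ : ∀ i, T i → D i) (j : Fin n) (tj : T j) : ℝ :=
  ∑ tm : ∀ i : {i : Fin n // i ≠ j}, T i.1,
    condQ q j tj tm *
      ∫ c, u j (combine j tj tm)
        (play r y (fun i => σ i (combine j tj tm i)) (combine j tj tm) c) ∂ν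

/-- A strategy profile `σ` is a Bayesian Nash equilibrium of the commitment game if no player
of any type can strictly increase their interim expected payoff by submitting a different
device. -/
def isBNE {n : ℕ} {T A D : Fin n → Type} {C : Type} [MeasurableSpace C]
    [∀ i, Fintype (T i)]
    (q : (∀ i, T i) → ℝ) (u : ∀ _i : Fin n, (∀ i, T i) → (∀ i, A i) → ℝ)
    (r : ∀ i : Fin n, D i → T i → (∀ j : {j : Fin n // j ≠ i}, D j.1) →
      (∀ j : {j : Fin n // j ≠ i}, Option (T j.1)) → C → A i)
    (y : ∀ i : Fin n, D i → T i → (∀ j : {j : Fin n // j ≠ i}, D j.1) →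
      {j : Fin n // j ≠ i} → Bool)
    (ν : Measure C) (σ : ∀ i, T i → D i) : Prop :=
  ∀ (j : Fin n) (tj : T j) (d' : D j),
    interim q u r y ν (Function.update σ j fun _ => d') j tj ≤ interim q u r y ν σ j tj


lemma combine_self {n : ℕ} {X : Fin n → Type} (j : Fin n) (xj : X j)
    (xm : ∀ i : {i : Fin n // i ≠ j}, X i.1) : combine j xj xm j = xj := by
  simp [combine]

lemma combine_of_ne {n : ℕ} {X : Fin n → Type} (j : Fin n) (xj : X j)
    (xm : ∀ i : {i : Fin n // i ≠ j}, X i.1) {i : Fin n} (h : i ≠ j) :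
    combine j xj xm i = xm ⟨i, h⟩ := by
  simp [combine, h]

lemma integrable_comp_finite {C : Type} [MeasurableSpace C] (ν : MeasureTheory.Measure C)
    [MeasureTheory.IsFiniteMeasure ν] {β : Type} [Fintype β] (g : C → β)
    (hg : ∀ b, MeasurableSet {c | g c = b}) (f : β → ℝ) :
    MeasureTheory.Integrable (fun c => f (g c)) ν := by
  classical
  have h : (fun c => f (g c))
      = fun c => ∑ b : β, Set.indicator {c | g c = b} (fun _ => f b) c := by
    funext c
    rw [Finset.sum_eq_single (g c)]
    · exact (Set.indicator_of_mem rfl _).symm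
    · intro b _ hb
      exact Set.indicator_of_notMem (fun h => hb h.symm) _
    · simp
  rw [h]
  exact integrable_finset_sum _ fun b _ =>
    (MeasureTheory.integrable_const (f b)).indicator (hg b)

/-- Theorem 1, folk theorem, equilibrium construction: given a target
correlated policy realized via the signal by `m`, inducing the feasible payoff `x`, and
signal-robust minimax punishment policies `w`, devices `dstar` that (a) disclose to player `j`
iff `j` submits `dstar j`, (b) play the realized target action when everyone submits `dstar`
and all types are disclosed, and (c) play the realized punishment against a unique deviator
`j` when all other types are disclosed, form a Bayesian Nash equilibrium of the commitment
game whose interim payoff vector is `x`. -/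
theorem folk_theorem_equilibrium_construction
    {n : ℕ} {T A D : Fin n → Type} {C : Type} [MeasurableSpace C]
    [∀ i, Fintype (T i)] [∀ i, Nonempty (T i)]
    [∀ i, Fintype (A i)] [∀ i, Nonempty (A i)] [∀ i, Nonempty (D i)]
    (q : (∀ i, T i) → ℝ) (hqpos : ∀ t, 0 < q t) (hqsum : ∑ t, q t = 1)
    (u : ∀ _i : Fin n, (∀ i, T i) → (∀ i, A i) → ℝ)
    (r : ∀ i : Fin n, D i → T i → (∀ j : {j : Fin n // j ≠ i}, D j.1) →
      (∀ j : {j : Fin n // j ≠ i}, Option (T j.1)) → C → A i)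
    (y : ∀ i : Fin n, D i → T i → (∀ j : {j : Fin n // j ≠ i}, D j.1) →
      {j : Fin n // j ≠ i} → Bool)
    (ν : Measure C) [IsProbabilityMeasure ν]
    (hrmeas : ∀ (i : Fin n) (di : D i) (ti : T i)
      (dm : ∀ j : {j : Fin n // j ≠ i}, D j.1)
      (θ : ∀ j : {j : Fin n // j ≠ i}, Option (T j.1)) (a : A i),
      MeasurableSet {c | r i di ti dm θ c = a})
    -- the target correlated policy `μ`, realized via the signal by the measurable maps `m(t,·)`
    (m : (∀ i, T i) → C → ∀ i, A i)
    (hmmeas : ∀ (t : ∀ i, T i) (a : ∀ i, A i), MeasurableSet {c | m t c = a})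
    -- the induced feasible payoff vector `x`
    (x : ∀ j : Fin n, T j → ℝ)
    (hx : ∀ (j : Fin n) (tj : T j),
      x j tj = ∑ tm : ∀ i : {i : Fin n // i ≠ j}, T i.1,
        condQ q j tj tm * ∫ c, u j (combine j tj tm) (m (combine j tj tm) c) ∂ν)
    -- punishment policies of the players other than `j`, realized via the signal by `w j`
    (w : ∀ j : Fin n, (∀ k : {k : Fin n // k ≠ j}, T k.1) → C →
      ∀ k : {k : Fin n // k ≠ j}, A k.1)
    (hwmeas : ∀ (j : Fin n) (tm : ∀ k : {k : Fin n // k ≠ j}, T k.1)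
      (b : ∀ k : {k : Fin n // k ≠ j}, A k.1), MeasurableSet {c | w j tm c = b})
    -- the signal-robust INTIR condition
    (hINTIR : ∀ (j : Fin n) (tj : T j) (α : C → A j),
      (∀ a : A j, MeasurableSet {c | α c = a}) →
      ∫ c, (∑ tm : ∀ k : {k : Fin n // k ≠ j}, T k.1,
        condQ q j tj tm * u j (combine j tj tm) (combine j (α c) (w j tm c))) ∂ν
        ≤ x j tj)
    -- the equilibrium devices
    (dstar : ∀ i, D i)
    -- (a): disclose to player `j` iff `j`'s device is `dstar j`
    (ha : ∀ (i : Fin n) (ti : T i) (dm : ∀ j : {j : Fin n // j ≠ i}, D j.1)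
      (j : {j : Fin n // j ≠ i}),
      y i (dstar i) ti dm j = true ↔ dm j = dstar j.1)
    -- (b): play the realized target action if all others submit `dstar` and all of the
    -- disclosed types, together with one's own type, assemble into the type profile `s`
    (hb : ∀ (i : Fin n) (ti : T i) (s : ∀ k, T k), s i = ti →
      ∀ c : C, r i (dstar i) ti (fun j => dstar j.1) (fun j => some (s j.1)) c = m s c i)
    -- (c): if exactly one player `j` deviates and all other components of `θ` are disclosed
    -- types, play one's component of the realized punishment against `j`
    (hc : ∀ (i : Fin n) (ti : T i) (j : Fin n) (hji : j ≠ i)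
      (dm : ∀ k : {k : Fin n // k ≠ i}, D k.1),
      dm ⟨j, hji⟩ ≠ dstar j →
      (∀ k : {k : Fin n // k ≠ i}, k.1 ≠ j → dm k = dstar k.1) →
      ∀ (θ : ∀ k : {k : Fin n // k ≠ i}, Option (T k.1))
        (s : ∀ k : {k : Fin n // k ≠ j}, T k.1),
        s ⟨i, Ne.symm hji⟩ = ti →
        (∀ (k : {k : Fin n // k ≠ i}) (hkj : k.1 ≠ j), θ k = some (s ⟨k.1, hkj⟩)) →
        ∀ c : C, r i (dstar i) ti dm θ c = w j s c ⟨i, Ne.symm hji⟩) :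
    isBNE q u r y ν (fun i _ => dstar i) ∧
      ∀ (j : Fin n) (tj : T j), interim q u r y ν (fun i _ => dstar i) j tj = x j tj := by
  classical
  -- play under all-dstar equals the target action
  have hplay : ∀ (t : ∀ i, T i) (c : C),
      play r y (fun i => dstar i) t c = m t c := by
    intro t c
    funext i
    show r i (dstar i) (t i) (fun k => dstar k.1)
      (fun k => if y k.1 (dstar k.1) (t k.1) (fun k' : {k' : Fin n // k' ≠ k.1} => dstar k'.1) ⟨i, Ne.symm k.2⟩
        then some (t k.1) else none) c = m t c i
    have hθ : (fun k : {k : Fin n // k ≠ i} =>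
        if y k.1 (dstar k.1) (t k.1) (fun k' : {k' : Fin n // k' ≠ k.1} => dstar k'.1) ⟨i, Ne.symm k.2⟩
        then some (t k.1) else none) = fun k : {k : Fin n // k ≠ i} => some (t k.1) := by
      funext k
      rw [if_pos ((ha k.1 (t k.1) (fun k' : {k' : Fin n // k' ≠ k.1} => dstar k'.1) ⟨i, Ne.symm k.2⟩).mpr rfl)]
    rw [hθ]
    exact hb i (t i) t rfl c
  have hpart2 : ∀ (j : Fin n) (tj : T j),
      interim q u r y ν (fun i _ => dstar i) j tj = x j tj := by
    intro j tj
    rw [hx]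
    simp only [interim, hplay]
  refine ⟨?_, hpart2⟩
  intro j tj d'
  by_cases hd : d' = dstar j
  · subst hd
    rw [show Function.update (fun i (_ : T i) => dstar i) j (fun _ => dstar j)
        = fun i (_ : T i) => dstar i from Function.update_eq_self j _]
  · -- deviation case
    have hs : Function.update (fun i (_ : T i) => dstar i) j (fun _ => d')
        = fun i (_ : T i) => combine j d' (fun k : {k : Fin n // k ≠ j} => dstar k.1) i := by
      funext i ti
      rcases eq_or_ne i j with rfl | h
      · rw [Function.update_self, combine_self]
      · rw [Function.update_of_ne h, combine_of_ne j d' (fun k : {k : Fin n // k ≠ j} => dstar k.1) h]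
    set α : C → A j := fun c => r j d' tj (fun k => dstar k.1) (fun _ => none) c with hα
    have hαmeas : ∀ a : A j, MeasurableSet {c | α c = a} :=
      fun a => hrmeas j d' tj (fun k => dstar k.1) (fun _ => none) a
    -- play under the deviation
    have hplay' : ∀ (tm : ∀ k : {k : Fin n // k ≠ j}, T k.1) (c : C),
        play r y (fun i => combine j d' (fun k : {k : Fin n // k ≠ j} => dstar k.1) i) (combine j tj tm) c
          = combine j (α c) (w j tm c) := by
      intro tm c
      funext i
      rcases eq_or_ne j i with rfl | hij'
      · rw [combine_self]
        show r j (combine j d' (fun k : {k : Fin n // k ≠ j} => dstar k.1) j) (combine j tj tm j) (fun k => combine j d' (fun k : {k : Fin n // k ≠ j} => dstar k.1) k.1)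
          (fun k => if y k.1 (combine j d' (fun k : {k : Fin n // k ≠ j} => dstar k.1) k.1) (combine j tj tm k.1)
            (fun k' : {k' : Fin n // k' ≠ k.1} => combine j d' (fun k : {k : Fin n // k ≠ j} => dstar k.1) k'.1) ⟨j, Ne.symm k.2⟩
            then some (combine j tj tm k.1) else none) c = α c
        have e1 : combine j d' (fun k : {k : Fin n // k ≠ j} => dstar k.1) j = d' := combine_self j d' (fun k : {k : Fin n // k ≠ j} => dstar k.1)
        have e2 : combine j tj tm j = tj := combine_self j tj tm
        have e3 : (fun k : {k : Fin n // k ≠ j} => combine j d' (fun k : {k : Fin n // k ≠ j} => dstar k.1) k.1)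
            = fun k : {k : Fin n // k ≠ j} => dstar k.1 := funext fun k => combine_of_ne j d' (fun k : {k : Fin n // k ≠ j} => dstar k.1) k.2
        have e4 : (fun k : {k : Fin n // k ≠ j} =>
            if y k.1 (combine j d' (fun k : {k : Fin n // k ≠ j} => dstar k.1) k.1) (combine j tj tm k.1)
              (fun k' : {k' : Fin n // k' ≠ k.1} => combine j d' (fun k : {k : Fin n // k ≠ j} => dstar k.1) k'.1) ⟨j, Ne.symm k.2⟩
              then some (combine j tj tm k.1) else none)
            = fun _ => none := by
          funext k
          rw [combine_of_ne j d' (fun k : {k : Fin n // k ≠ j} => dstar k.1) k.2, if_neg]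
          intro hy
          have := (ha k.1 (combine j tj tm k.1)
            (fun k' : {k' : Fin n // k' ≠ k.1} => combine j d' (fun k : {k : Fin n // k ≠ j} => dstar k.1) k'.1)
            ⟨j, Ne.symm k.2⟩).mp hy
          rw [combine_self] at this
          exact hd this
        rw [e1, e2, e3, e4]
      · have hij : i ≠ j := Ne.symm hij'
        rw [combine_of_ne j (α c) (w j tm c) hij]
        show r i (combine j d' (fun k : {k : Fin n // k ≠ j} => dstar k.1) i) (combine j tj tm i) (fun k => combine j d' (fun k : {k : Fin n // k ≠ j} => dstar k.1) k.1)
          (fun k => if y k.1 (combine j d' (fun k : {k : Fin n // k ≠ j} => dstar k.1) k.1) (combine j tj tm k.1)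
            (fun k' : {k' : Fin n // k' ≠ k.1} => combine j d' (fun k : {k : Fin n // k ≠ j} => dstar k.1) k'.1) ⟨i, Ne.symm k.2⟩
            then some (combine j tj tm k.1) else none) c = w j tm c ⟨i, hij⟩
        rw [combine_of_ne j d' (fun k : {k : Fin n // k ≠ j} => dstar k.1) hij]
        exact hc i (combine j tj tm i) j (Ne.symm hij)
          (fun k => combine j d' (fun k : {k : Fin n // k ≠ j} => dstar k.1) k.1)
          (by
            show combine j d' (fun k : {k : Fin n // k ≠ j} => dstar k.1) j ≠ dstar j
            rw [combine_self]; exact hd)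
          (fun k hk => combine_of_ne j d' (fun k : {k : Fin n // k ≠ j} => dstar k.1) hk)
          _ tm ((combine_of_ne j tj tm hij).symm)
          (by
            intro k hkj
            show (if y k.1 (combine j d' (fun k : {k : Fin n // k ≠ j} => dstar k.1) k.1) (combine j tj tm k.1)
              (fun k' : {k' : Fin n // k' ≠ k.1} => combine j d' (fun k : {k : Fin n // k ≠ j} => dstar k.1) k'.1) ⟨i, Ne.symm k.2⟩
              then some (combine j tj tm k.1) else none) = some (tm ⟨k.1, hkj⟩)
            rw [combine_of_ne j d' (fun k : {k : Fin n // k ≠ j} => dstar k.1) hkj, combine_of_ne j tj tm hkj,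
              if_pos ((ha k.1 (tm ⟨k.1, hkj⟩)
                (fun k' : {k' : Fin n // k' ≠ k.1} => combine j d' (fun k : {k : Fin n // k ≠ j} => dstar k.1) k'.1)
                ⟨i, Ne.symm k.2⟩).mpr (combine_of_ne j d' (fun k : {k : Fin n // k ≠ j} => dstar k.1) hij))])
          c
    -- integrability of the deviation payoff
    have hint : ∀ tm : ∀ k : {k : Fin n // k ≠ j}, T k.1,
        MeasureTheory.Integrable
          (fun c => condQ q j tj tm *
            u j (combine j tj tm) (combine j (α c) (w j tm c))) ν := by
      intro tm
      have := integrable_comp_finite ν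
        (fun c => ((α c, w j tm c) : A j × (∀ k : {k : Fin n // k ≠ j}, A k.1)))
        (by
          intro b
          have : {c | (α c, w j tm c) = b} = {c | α c = b.1} ∩ {c | w j tm c = b.2} := by
            ext c
            simp [Prod.ext_iff]
          rw [this]
          exact (hαmeas b.1).inter (hwmeas j tm b.2))
        (fun p => u j (combine j tj tm) (combine j p.1 p.2))
      exact this.const_mul _
    have key : interim q u r y ν
        (Function.update (fun i (_ : T i) => dstar i) j fun _ => d') j tj
        = ∫ c, (∑ tm : ∀ k : {k : Fin n // k ≠ j}, T k.1,
            condQ q j tj tm * u j (combine j tj tm) (combine j (α c) (w j tm c))) ∂ν := by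
      rw [MeasureTheory.integral_finset_sum _ (fun tm _ => hint tm)]
      simp only [interim, hs, hplay', MeasureTheory.integral_const_mul]
    rw [hpart2 j tj, key]
    exact hINTIR j tj α hαmeas
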